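/- Let G be a finite group and X ⊆ G. Then X is a CI-subset of G if and only if any two regular subgroups of Aut(Cay(G,X)) that are isomorphic to G are conjugate in Aut(Cay(G,X)). -/

import Mathlib

open Pointwise

/-! ### Cayley digraphs and CI-subsets (groups written additively) -/

/-- The arc set `R(S) = {(g, s+g) : g ∈ G, s ∈ S}` of the Cayley digraph `Cay(G,S)`. -/
def arcs {G : Type*} [AddGroup G] (S : Set G) : Set (G × G) :=
  {a | ∃ s ∈ S, a.2 = s + a.1}

/-- The image `R^f` of a set of arcs under a permutation `f`. -/
def pmap {G : Type*} (f : Equiv.Perm G) (R : Set (G × G)) : Set (G × G) :=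
  (fun a => (f a.1, f a.2)) '' R

/-- `S ⊆ G` is a CI-subset: every Cayley digraph isomorphic to `Cay(G,S)` is Cayley
isomorphic to it. -/
def IsCISubset {G : Type*} [AddGroup G] (S : Set G) : Prop :=
  ∀ T : Set G, (∃ f : Equiv.Perm G, pmap f (arcs S) = arcs T) →
    ∃ φ : G ≃+ G, ⇑φ '' S = T

/-- `G` is a DCI-group: every subset of `G` is a CI-subset. -/
def IsDCI (G : Type*) [AddGroup G] : Prop := ∀ S : Set G, IsCISubset S

/-! ### S-rings, given by their partitions into basic sets.

The condition that the ℤ-span of the blocks is a subring of the group ring is encoded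
combinatorially: the number of ways to write an element as a sum `x + y` with `x ∈ X`,
`y ∈ Y` (for blocks `X, Y`) is constant on each block. -/

structure SRing (G : Type*) [AddGroup G] where
  blocks : Set (Set G)
  nonempty_mem : ∀ X ∈ blocks, X.Nonempty
  existsUnique_mem : ∀ g : G, ∃! X, X ∈ blocks ∧ g ∈ X
  zero_mem : ({0} : Set G) ∈ blocks
  neg_mem : ∀ X ∈ blocks, -X ∈ blocks
  count_const : ∀ X ∈ blocks, ∀ Y ∈ blocks, ∀ Z ∈ blocks, ∀ z ∈ Z, ∀ z' ∈ Z,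
    {a : G × G | a.1 ∈ X ∧ a.2 ∈ Y ∧ a.1 + a.2 = z}.ncard =
      {a : G × G | a.1 ∈ X ∧ a.2 ∈ Y ∧ a.1 + a.2 = z'}.ncard

/-- The automorphisms of an S-ring with family of basic sets `Bl`:
permutations preserving each arc set `R(X)`, `X ∈ Bl`. -/
def autPerm {G : Type*} [AddGroup G] (Bl : Set (Set G)) : Set (Equiv.Perm G) :=
  {f | ∀ X ∈ Bl, pmap f (arcs X) = arcs X}

/-- The isomorphisms from an S-ring with basic sets `Bl` onto some S-ring over `G`. -/
def isoPerm {G : Type*} [AddGroup G] (Bl : Set (Set G)) : Set (Equiv.Perm G) :=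
  {f | ∃ B : SRing G,
    {R | ∃ X ∈ Bl, R = pmap f (arcs X)} = {R | ∃ Y ∈ B.blocks, R = arcs Y}}

/-- An S-ring is CI if `iso(A) = Aut(A)Aut(G)` (composition: first the S-ring
automorphism, then the group automorphism). -/
def IsCIBlocks {G : Type*} [AddGroup G] (Bl : Set (Set G)) : Prop :=
  isoPerm Bl = {f | ∃ γ ∈ autPerm Bl, ∃ φ : G ≃+ G, ∀ x, f x = φ (γ x)}

/-- The right translation `x ↦ x + g` as a permutation. -/
def addRightPerm {G : Type*} [AddGroup G] (g : G) : Equiv.Perm G := Equiv.addRight g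

/-- `G_r`, the set of right translations of `G`. -/
def rSet (G : Type*) [AddGroup G] : Set (Equiv.Perm G) := Set.range addRightPerm

/-- The basic sets of `V(K,G)`: the orbits on `G` of the stabilizer `K_e` of the
identity in `K`. -/
def VBlocks {G : Type*} [AddGroup G] (K : Set (Equiv.Perm G)) : Set (Set G) :=
  {O | ∃ g : G, O = {h | ∃ k ∈ K, k 0 = 0 ∧ k g = h}}

/-- An S-ring is schurian if it equals `V(K,G)` for some `G_r ≤ K ≤ Sym(G)`. -/
def IsSchurianBlocks {G : Type*} [AddGroup G] (Bl : Set (Set G)) : Prop :=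
  ∃ K : Subgroup (Equiv.Perm G), rSet G ⊆ (K : Set (Equiv.Perm G)) ∧
    Bl = VBlocks (K : Set (Equiv.Perm G))

/-- `f` lies in the 2-closure of `K`: on every pair it agrees with some member of `K`. -/
def in2Closure {G : Type*} (K : Set (Equiv.Perm G)) (f : Equiv.Perm G) : Prop :=
  ∀ a b : G, ∃ k ∈ K, k a = f a ∧ k b = f b

/-- `K` is 2-closed: `K = K^(2)`. -/
def Is2Closed {G : Type*} (K : Subgroup (Equiv.Perm G)) : Prop :=
  ∀ f, in2Closure (K : Set (Equiv.Perm G)) f → f ∈ K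

/-- Conjugate `S^γ` of a set of permutations. -/
def conjSet {G : Type*} (γ : Equiv.Perm G) (S : Set (Equiv.Perm G)) : Set (Equiv.Perm G) :=
  (fun s => γ⁻¹ * s * γ) '' S

/-- `K1 ⪯_G K2`: `K1` is a `G`-complete subgroup of `K2`. -/
def GComplete {G : Type*} [AddGroup G] (K1 K2 : Subgroup (Equiv.Perm G)) : Prop :=
  K1 ≤ K2 ∧ ∀ γ : Equiv.Perm G, conjSet γ (rSet G) ⊆ (K2 : Set (Equiv.Perm G)) →
    ∃ δ ∈ K2, conjSet δ (conjSet γ (rSet G)) ⊆ (K1 : Set (Equiv.Perm G))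

/-- `K ∈ Sup_2(G_r)`: `K` is a 2-closed subgroup of `Sym(G)` containing `G_r`. -/
def InSup2 {G : Type*} [AddGroup G] (K : Subgroup (Equiv.Perm G)) : Prop :=
  rSet G ⊆ (K : Set (Equiv.Perm G)) ∧ Is2Closed K

/-- `K ∈ Sup_2^min(G_r)`: `K` is a minimal element of `(Sup_2(G_r), ⪯_G)`. -/
def InSup2Min {G : Type*} [AddGroup G] (K : Subgroup (Equiv.Perm G)) : Prop :=
  InSup2 K ∧ ∀ K' : Subgroup (Equiv.Perm G), InSup2 K' → GComplete K' K → K' = K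

/-! ### A-sets, A-subgroups, sections, radicals, products -/

/-- `X` is an `A`-set: a union of basic sets. -/
def IsASet {G : Type*} [AddGroup G] (Bl : Set (Set G)) (X : Set G) : Prop :=
  ∃ C ⊆ Bl, X = ⋃₀ C

/-- An `A`-subgroup. -/
def IsASubgroup {G : Type*} [AddGroup G] (Bl : Set (Set G)) (U : AddSubgroup G) : Prop :=
  IsASet Bl (U : Set G)

/-- The radical `rad(X) = {g : g + X = X + g = X}`. -/
def radSet {G : Type*} [AddGroup G] (X : Set G) : Set G :=
  {g | (fun x => g + x) '' X = X ∧ (fun x => x + g) '' X = X}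

/-- `A` is the `S`-wreath (generalized wreath) product for the section `S = U/L`. -/
def IsWreath {G : Type*} [AddGroup G] (Bl : Set (Set G)) (U L : AddSubgroup G) : Prop :=
  IsASubgroup Bl U ∧ IsASubgroup Bl L ∧ L ≤ U ∧ L.Normal ∧
    ∀ X ∈ Bl, ¬X ⊆ (U : Set G) → (L : Set G) ⊆ radSet X

/-- Nontrivial (proper) `S`-wreath product. -/
def IsNontrivialWreath {G : Type*} [AddGroup G] (Bl : Set (Set G))
    (U L : AddSubgroup G) : Prop :=
  IsWreath Bl U L ∧ L ≠ ⊥ ∧ U ≠ ⊤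

/-- `A` is decomposable: a nontrivial generalized wreath product. -/
def IsDecomposable {G : Type*} [AddGroup G] (Bl : Set (Set G)) : Prop :=
  ∃ U L : AddSubgroup G, IsNontrivialWreath Bl U L

/-! ### Cyclotomic S-rings, Cayley minimality, 2-minimality, normality -/

/-- The set of orbits on `G` of a group `M` of automorphisms of `G`. -/
def autOrbits {G : Type*} [AddGroup G] (M : AddSubgroup (AddAut G)) : Set (Set G) :=
  {O | ∃ g : G, O = {h | ∃ φ ∈ M, φ g = h}}

/-- An S-ring is cyclotomic if its basic sets are the orbits of a group of
automorphisms of `G`. -/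
def IsCyclotomic {G : Type*} [AddGroup G] (Bl : Set (Set G)) : Prop :=
  ∃ M : AddSubgroup (AddAut G), Bl = autOrbits M

/-- `aut_G(A) = Aut(A) ∩ Aut(G)`. -/
def autAddSet {G : Type*} [AddGroup G] (Bl : Set (Set G)) : Set (AddAut G) :=
  {φ | (φ : G ≃+ G).toEquiv ∈ autPerm Bl}

/-- Two sets of automorphisms have the same orbits on `G`. -/
def sameAutOrbits {G : Type*} [AddGroup G] (K M : Set (AddAut G)) : Prop :=
  ∀ g : G, {h | ∃ φ ∈ K, φ g = h} = {h | ∃ φ ∈ M, φ g = h}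

/-- A (cyclotomic) S-ring is Cayley minimal if the only subgroup of `Aut(G)` Cayley
equivalent to `aut_G(A)` is `aut_G(A)` itself. -/
def IsCayleyMinimal {G : Type*} [AddGroup G] (Bl : Set (Set G)) : Prop :=
  IsCyclotomic Bl ∧ ∀ K : AddSubgroup (AddAut G),
    sameAutOrbits (K : Set (AddAut G)) (autAddSet Bl) →
      (K : Set (AddAut G)) = autAddSet Bl

/-- Two sets of permutations have the same orbits on `G × G`. -/
def samePairOrbits {G : Type*} (K M : Set (Equiv.Perm G)) : Prop :=
  ∀ a b : G, {c : G × G | ∃ f ∈ K, (f a, f b) = c} = {c : G × G | ∃ f ∈ M, (f a, f b) = c}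

/-- An S-ring is 2-minimal if the only subgroup of `Sym(G)` containing `G_r` and
2-equivalent to `Aut(A)` is `Aut(A)` itself. -/
def Is2Minimal {G : Type*} [AddGroup G] (Bl : Set (Set G)) : Prop :=
  ∀ K : Subgroup (Equiv.Perm G), rSet G ⊆ (K : Set (Equiv.Perm G)) →
    samePairOrbits (K : Set (Equiv.Perm G)) (autPerm Bl) →
      (K : Set (Equiv.Perm G)) = autPerm Bl

/-- An S-ring is normal if `G_r` is normal in `Aut(A)`. -/
def IsNormalBlocks {G : Type*} [AddGroup G] (Bl : Set (Set G)) : Prop :=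
  ∀ σ ∈ autPerm Bl, ∀ t ∈ rSet G, σ * t * σ⁻¹ ∈ rSet G

/-- A set of permutations normalizes another one. -/
def normalizesInto {M : Type*} [Group M] (Δ N : Set M) : Prop :=
  ∀ σ ∈ Δ, ∀ t ∈ N, σ * t * σ⁻¹ ∈ N

/-! ### Kernels, restriction to subgroups, quotients and sections -/

/-- `Aut(A)_{G/L}`: the automorphisms of the S-ring fixing every `L`-coset setwise. -/
def kernelPerm {G : Type*} [AddGroup G] (Bl : Set (Set G)) (L : AddSubgroup G) :
    Set (Equiv.Perm G) :=
  {f | f ∈ autPerm Bl ∧ ∀ g : G, ⇑f '' ((L : Set G) + {g}) = (L : Set G) + {g}}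

/-- The basic sets of `A_U` (for an `A`-subgroup `U`), as subsets of `U`. -/
def subBlocks {G : Type*} [AddGroup G] (Bl : Set (Set G)) (U : AddSubgroup G) :
    Set (Set U) :=
  {Z | ∃ X ∈ Bl, X ⊆ (U : Set G) ∧ Z = ((Subtype.val) ⁻¹' X : Set U)}

/-- The basic sets of `A_{G/L}`: images of basic sets under `G → G/L`. -/
def quotBlocks {G : Type*} [AddGroup G] (Bl : Set (Set G)) (L : AddSubgroup G) :
    Set (Set (G ⧸ L)) :=
  {Z | ∃ X ∈ Bl, Z = (QuotientAddGroup.mk : G → G ⧸ L) '' X}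

/-- The basic sets of `A_S` for the section `S = U/L`: images under `U → U/L` of the
basic sets contained in `U`. -/
def secBlocks {G : Type*} [AddGroup G] (Bl : Set (Set G)) (U L : AddSubgroup G) :
    Set (Set (U ⧸ L.addSubgroupOf U)) :=
  {Z | ∃ X ∈ Bl, X ⊆ (U : Set G) ∧
    Z = (QuotientAddGroup.mk : U → U ⧸ L.addSubgroupOf U) '' {u : U | (u : G) ∈ X}}

/-- The permutations of an (invariant) subgroup `U` induced by members of `F`. -/
def inducedPerm {G : Type*} [AddGroup G] (F : Set (Equiv.Perm G)) (U : AddSubgroup G) :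
    Set (Equiv.Perm U) :=
  {σ | ∃ f ∈ F, ∀ x : U, (σ x : G) = f (x : G)}

/-- The automorphisms of an (invariant) subgroup `U` induced by members of `F ⊆ Aut(G)`. -/
def inducedAddAut {G : Type*} [AddGroup G] (F : Set (AddAut G)) (U : AddSubgroup G) :
    Set (AddAut U) :=
  {σ | ∃ φ ∈ F, ∀ x : U, ((σ x : U) : G) = φ (x : G)}

/-- `S^f = S`: the permutation `f` maps `U` onto itself and permutes the `L`-cosets
inside `U`. -/
def secInvariant {G : Type*} [AddGroup G] (f : Equiv.Perm G) (U L : AddSubgroup G) : Prop :=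
  ⇑f '' (U : Set G) = (U : Set G) ∧
    ∀ u ∈ U, ⇑f '' ((L : Set G) + {u}) = (L : Set G) + {f u}

/-- `σ` is the bijection `f^S` of the section `S = U/L` induced by `f`. -/
def inducesOnSec {G : Type*} [AddGroup G] (f : Equiv.Perm G) (U L : AddSubgroup G)
    (σ : Equiv.Perm (U ⧸ L.addSubgroupOf U)) : Prop :=
  ∀ u v : U, f (u : G) = (v : G) →
    σ (QuotientAddGroup.mk u) = QuotientAddGroup.mk v

/-- `Δ^S`: the bijections of the section `S = U/L` induced by members of `Δ`
leaving `S` invariant. -/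
def secPerms {G : Type*} [AddGroup G] (F : Set (Equiv.Perm G)) (U L : AddSubgroup G) :
    Set (Equiv.Perm (U ⧸ L.addSubgroupOf U)) :=
  {σ | ∃ f ∈ F, secInvariant f U L ∧ inducesOnSec f U L σ}

/-- `K^S` for `K ≤ Aut(U)`: automorphisms of `S = U/L` induced by members of `K`. -/
def secAutOfSub {G : Type*} [AddCommGroup G] (U L : AddSubgroup G)
    (K : Set (AddAut U)) : Set (AddAut (U ⧸ L.addSubgroupOf U)) :=
  {ψ | ∃ φ ∈ K, ∀ u : U, ψ (QuotientAddGroup.mk u) = QuotientAddGroup.mk (φ u)}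

/-- `K^S` for `K ≤ Aut(G/L)`: automorphisms of `S = U/L` obtained by restricting
members of `K`. -/
def secAutOfQuot {G : Type*} [AddCommGroup G] (U L : AddSubgroup G)
    (K : Set (AddAut (G ⧸ L))) : Set (AddAut (U ⧸ L.addSubgroupOf U)) :=
  {ψ | ∃ φ ∈ K, ∀ u v : U,
    φ (QuotientAddGroup.mk (u : G)) = QuotientAddGroup.mk (v : G) →
      ψ (QuotientAddGroup.mk u) = QuotientAddGroup.mk v}

/-! ### p-S-rings and some particular S-rings -/

/-- A `p`-S-ring: all basic sets have `p`-power size. -/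
def IsPSRing {G : Type*} [AddGroup G] (p : ℕ) (Bl : Set (Set G)) : Prop :=
  ∀ X ∈ Bl, ∃ k : ℕ, X.ncard = p ^ k

/-- The family `Bl` of basic sets is that of `ℤC_p ≀ ℤC_p ≀ ℤC_p`: singletons in `B1`,
`B1`-cosets in `B2 \ B1`, and `B2`-cosets outside `B2`. -/
def IsWr3Blocks {G : Type*} [AddGroup G] (p : ℕ) (Bl : Set (Set G)) : Prop :=
  ∃ B1 B2 : AddSubgroup G, B1 < B2 ∧ (B1 : Set G).ncard = p ∧
    (B2 : Set G).ncard = p ^ 2 ∧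
    ∀ X : Set G, X ∈ Bl ↔
      ((∃ x ∈ B1, X = {x}) ∨
        (∃ x ∈ (B2 : Set G) \ (B1 : Set G), X = (B1 : Set G) + {x}) ∨
        (∃ x ∈ (Set.univ : Set G) \ (B2 : Set G), X = (B2 : Set G) + {x}))

/-- The family `Bl` of basic sets is that of `ℤC_p ≀ ℤC_p²`: singletons in `B1` and
`B1`-cosets outside `B1`. -/
def IsWrCpCp2Blocks {G : Type*} [AddGroup G] (p : ℕ) (Bl : Set (Set G)) : Prop :=
  ∃ B1 : AddSubgroup G, (B1 : Set G).ncard = p ∧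
    ∀ X : Set G, X ∈ Bl ↔
      ((∃ x ∈ B1, X = {x}) ∨ (∃ x : G, x ∉ B1 ∧ X = (B1 : Set G) + {x}))

/-- The unipotent map `σ(x,y,z) = (x, x+y, y+z)` on `(ℤ/p)³` defining `D_p`. -/
def dpStep (p : ℕ) (v : Fin 3 → ZMod p) : Fin 3 → ZMod p :=
  ![v 0, v 0 + v 1, v 1 + v 2]

/-- The orbit of a point under the cyclic group generated by `σ`. -/
def dpOrbit (p : ℕ) (x : Fin 3 → ZMod p) : Set (Fin 3 → ZMod p) :=
  {y | ∃ k : ℕ, (dpStep p)^[k] x = y}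

/-- The family `Bl` of basic sets is (isomorphic to) that of the S-ring `D_p`. -/
def IsDpBlocks {W : Type*} [AddGroup W] (p : ℕ) (Bl : Set (Set W)) : Prop :=
  ∃ e : W ≃+ (Fin 3 → ZMod p), (fun X => ⇑e '' X) '' Bl = Set.range (dpOrbit p)

/-! ### Cayley graph automorphisms and regular subgroups -/

/-- `Aut(Cay(G,X))`. -/
def autCaySet {G : Type*} [AddGroup G] (X : Set G) : Set (Equiv.Perm G) :=
  {f | pmap f (arcs X) = arcs X}

/-- A regular subgroup of `Sym(G)`: transitive, and only the identity has a fixed point. -/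
def IsRegularSubgroup {G : Type*} (K : Subgroup (Equiv.Perm G)) : Prop :=
  (∀ a b : G, ∃ k ∈ K, k a = b) ∧ ∀ k ∈ K, (∃ a : G, k a = a) → k = 1

/-! ### The groups `C_p^4 × C_q` -/

/-- The Sylow `p`-subgroup `P` of `C_p^4 × C_q`. -/
def Psub (p q : ℕ) : AddSubgroup ((Fin 4 → ZMod p) × ZMod q) :=
  (⊤ : AddSubgroup (Fin 4 → ZMod p)).prod ⊥

/-- The Sylow `q`-subgroup `Q` of `C_p^4 × C_q`. -/
def Qsub (p q : ℕ) : AddSubgroup ((Fin 4 → ZMod p) × ZMod q) :=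
  (⊥ : AddSubgroup (Fin 4 → ZMod p)).prod ⊤

/-!
A regular subgroup `H ≅ G` of `Sym(G)` is conjugate to the right regular representation `G_r`
by the orbit map of `0`. If `u G_r u⁻¹ = H ≤ Aut(Cay(G,X))`, then `u⁻¹` maps `Cay(G,X)` onto a
`G_r`-invariant digraph, i.e. onto some `Cay(G,T)`; a CI-subset has a `φ ∈ Aut(G)` with
`φ(X) = T`, and since `Aut(G)` normalizes `G_r`, `uφ ∈ Aut(Cay(G,X))` conjugates `G_r` to `H`.
Conversely, if `f` maps `Cay(G,X)` onto `Cay(G,T)`, then `G_r` and `f⁻¹ G_r f` are regular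
subgroups of `Aut(Cay(G,X))`; a `w ∈ Aut(Cay(G,X))` conjugating one to the other makes `f w`
normalize `G_r`, and every such permutation is a right translation composed with an
automorphism of `G`, which then maps `X` onto `T`.
-/

open Equiv

lemma pmap_eq_smul {α : Type*} (f : Perm α) (R : Set (α × α)) : pmap f R = f • R := rfl

lemma Subgroup.map_map_conj {M : Type*} [Group M] (K : Subgroup M) (a b : M) :
    (K.map (MulAut.conj b).toMonoidHom).map (MulAut.conj a).toMonoidHom =
      K.map (MulAut.conj (a * b)).toMonoidHom := by
  rw [Subgroup.map_map, map_mul]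
  rfl

lemma IsRegularSubgroup.map_conj {α : Type*} {H : Subgroup (Perm α)}
    (hH : IsRegularSubgroup H) (u : Perm α) :
    IsRegularSubgroup (H.map (MulAut.conj u).toMonoidHom) := by
  constructor
  · intro a b
    obtain ⟨k, hk, hkab⟩ := hH.1 (u⁻¹ a) (u⁻¹ b)
    exact ⟨u * k * u⁻¹, ⟨k, hk, rfl⟩, (Perm.eq_inv_iff_eq.1 hkab :)⟩
  · rintro _ ⟨k, hk, rfl⟩ ⟨a, ha⟩
    obtain rfl : k = 1 := hH.2 k hk ⟨u⁻¹ a, Perm.eq_inv_iff_eq.2 ha⟩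
    simp

section CayleyDigraph

variable {G : Type*} [AddGroup G]

def autCay (X : Set G) : Subgroup (Perm G) := MulAction.stabilizer (Perm G) (arcs X)

lemma mem_autCay {X : Set G} {f : Perm G} : f ∈ autCay X ↔ f • arcs X = arcs X := Iff.rfl

lemma coe_autCay (X : Set G) : (autCay X : Set (Perm G)) = autCaySet X := rfl

lemma mem_arcs {S : Set G} {a b : G} : (a, b) ∈ arcs S ↔ b - a ∈ S := by
  simp only [arcs, Set.mem_ofPred_eq]
  exact ⟨by rintro ⟨s, hs, rfl⟩; simpa, fun h => ⟨_, h, (sub_add_cancel b a).symm⟩⟩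

lemma arcs_injective : Function.Injective (arcs : Set G → Set (G × G)) := fun S T h => by
  ext s; simpa [mem_arcs] using Set.ext_iff.1 h (0, s)

lemma addRightPerm_smul_arcs (c : G) (S : Set G) : addRightPerm c • arcs S = arcs S := by
  ext ⟨a, b⟩
  rw [Set.mem_smul_set_iff_inv_smul_mem]
  simp [addRightPerm, mem_arcs]

lemma addEquiv_smul_arcs (φ : G ≃+ G) (S : Set G) : (φ : Perm G) • arcs S = arcs (φ '' S) := by
  ext ⟨a, b⟩
  rw [Set.mem_smul_set_iff_inv_smul_mem]
  simp only [Prod.smul_mk, Perm.smul_def, Perm.coe_inv, AddEquiv.coe_toEquiv_symm, mem_arcs,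
    Set.mem_image, ← map_sub]
  exact ⟨fun h => ⟨_, h, φ.apply_symm_apply _⟩, by rintro ⟨x, hx, hxb⟩; simpa [← hxb]⟩

lemma eq_arcs_of_forall_addRightPerm_smul_eq {R : Set (G × G)}
    (hR : ∀ c : G, addRightPerm c • R = R) : R = arcs {t | ((0 : G), t) ∈ R} := by
  ext ⟨a, b⟩
  rw [mem_arcs, Set.mem_ofPred_eq, ← Set.smul_mem_smul_set_iff (a := addRightPerm (-a)), hR]
  simp [addRightPerm, sub_eq_add_neg]

end CayleyDigraph

section RightRegular

variable {G : Type*} [AddGroup G]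

def rightRegularHom (G : Type*) [AddGroup G] : Multiplicative G →* Perm G where
  toFun g := addRightPerm (-g.toAdd)
  map_one' := by ext; simp [addRightPerm]
  map_mul' a b := by ext; simp [addRightPerm, add_assoc]

lemma rightRegularHom_injective : Function.Injective (rightRegularHom G) := fun a b h => by
  simpa [rightRegularHom, addRightPerm] using congr($h 0)

def rightRegular (G : Type*) [AddGroup G] : Subgroup (Perm G) := (rightRegularHom G).range

noncomputable def rightRegularEquiv : rightRegular G ≃* Multiplicative G :=
  (MonoidHom.ofInjective rightRegularHom_injective).symm

lemma mem_rightRegular {f : Perm G} : f ∈ rightRegular G ↔ ∃ c, addRightPerm c = f :=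
  ⟨fun ⟨g, hg⟩ => ⟨_, hg⟩, fun ⟨c, hc⟩ => ⟨.ofAdd (-c), by simpa [rightRegularHom]⟩⟩

lemma rightRegular_le_autCay (X : Set G) : rightRegular G ≤ autCay X := by
  rintro _ ⟨g, rfl⟩
  exact addRightPerm_smul_arcs _ X

lemma isRegularSubgroup_rightRegular : IsRegularSubgroup (rightRegular G) := by
  refine ⟨fun a b => ⟨_, mem_rightRegular.2 ⟨-a + b, rfl⟩, by simp [addRightPerm]⟩, ?_⟩
  rintro _ hk ⟨a, ha⟩
  obtain ⟨c, rfl⟩ := mem_rightRegular.1 hk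
  obtain rfl : c = 0 := by simpa [addRightPerm] using ha
  ext; simp [addRightPerm]

lemma exists_conj_comp_rightRegularHom_eq {σ : Multiplicative G →* Perm G}
    (hσ : Function.Injective σ) (hreg : IsRegularSubgroup σ.range) :
    ∃ u : Perm G, (MulAut.conj u).toMonoidHom.comp (rightRegularHom G) = σ := by
  set o : G → G := fun x => σ (.ofAdd (-x)) 0
  have ho_equivariant : ∀ g x, o (x + -g.toAdd) = σ g (o x) := fun g x => by
    simp only [o, neg_add_rev, neg_neg, ofAdd_add, map_mul, Perm.mul_apply, ofAdd_toAdd]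
  have ho_injective : Function.Injective o := fun x y hxy => by
    have hfix : σ ((Multiplicative.ofAdd (-y))⁻¹ * .ofAdd (-x)) = 1 :=
      hreg.2 _ ⟨_, rfl⟩ ⟨0, by
        rw [map_mul, map_inv, Perm.mul_apply]
        exact Perm.inv_eq_iff_eq.2 hxy⟩
    simpa using (inv_mul_eq_one.1 (hσ (hfix.trans σ.map_one.symm))).symm
  have ho_surjective : Function.Surjective o := fun a => by
    obtain ⟨_, ⟨m, rfl⟩, hm⟩ := hreg.1 0 a
    exact ⟨-m.toAdd, by rwa [← ofAdd_toAdd m, ← neg_neg m.toAdd] at hm⟩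
  refine ⟨.ofBijective o ⟨ho_injective, ho_surjective⟩, MonoidHom.ext fun g => ?_⟩
  rw [MonoidHom.comp_apply, MulEquiv.coe_toMonoidHom, MulAut.conj_apply, mul_inv_eq_iff_eq_mul]
  ext x
  exact ho_equivariant g x

lemma IsRegularSubgroup.exists_map_conj_rightRegular_eq {H : Subgroup (Perm G)}
    (hH : IsRegularSubgroup H) (e : H ≃* Multiplicative G) :
    ∃ u : Perm G, (rightRegular G).map (MulAut.conj u).toMonoidHom = H := by
  set σ := H.subtype.comp e.symm.toMonoidHom
  have hσ : σ.range = H := by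
    rw [MonoidHom.range_comp, MonoidHom.range_eq_top.2 e.symm.surjective,
      ← MonoidHom.range_eq_map, H.range_subtype]
  obtain ⟨u, hu⟩ := exists_conj_comp_rightRegularHom_eq
    (H.subtype_injective.comp e.symm.injective) (hσ ▸ hH)
  exact ⟨u, by rw [rightRegular, MonoidHom.map_range, hu, hσ]⟩

lemma addEquiv_mul_addRightPerm_mul_inv (φ : G ≃+ G) (c : G) :
    (φ : Perm G) * addRightPerm c * (φ : Perm G)⁻¹ = addRightPerm (φ c) := by
  ext x; simp [addRightPerm]

lemma map_conj_addEquiv_rightRegular (φ : G ≃+ G) :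
    (rightRegular G).map (MulAut.conj (φ : Perm G)).toMonoidHom = rightRegular G := by
  ext f
  simp only [Subgroup.mem_map, mem_rightRegular, MulEquiv.coe_toMonoidHom, MulAut.conj_apply]
  constructor
  · rintro ⟨_, ⟨c, rfl⟩, rfl⟩
    exact ⟨φ c, (addEquiv_mul_addRightPerm_mul_inv φ c).symm⟩
  · rintro ⟨c, rfl⟩
    exact ⟨_, ⟨φ.symm c, rfl⟩, by rw [addEquiv_mul_addRightPerm_mul_inv, φ.apply_symm_apply]⟩

lemma exists_addEquiv_of_map_conj_rightRegular_le {f : Perm G}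
    (hf : (rightRegular G).map (MulAut.conj f).toMonoidHom ≤ rightRegular G) :
    ∃ c : G, ∃ φ : G ≃+ G, f = addRightPerm c * (φ : Perm G) := by
  have hf_add : ∀ x g, f (x + g) = f x + (-f 0 + f g) := by
    intro x g
    obtain ⟨g', hg'⟩ := mem_rightRegular.1 (hf ⟨_, mem_rightRegular.2 ⟨g, rfl⟩, rfl⟩)
    have hshift : ∀ y, f (y + g) = f y + g' := fun y => by
      simpa [addRightPerm] using congr($hg'.symm (f y))
    have hg : f g = f 0 + g' := by simpa using hshift 0
    rw [hshift x, hg, neg_add_cancel_left]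
  refine ⟨f 0, { f.trans (Equiv.addRight (-f 0)) with map_add' := fun x y => ?_ }, ?_⟩
  · simp [hf_add, add_assoc]
  · ext x; simp [addRightPerm]

lemma smul_arcs_of_map_conj_rightRegular_le {f : Perm G}
    (hf : (rightRegular G).map (MulAut.conj f).toMonoidHom ≤ rightRegular G) (S : Set G) :
    ∃ φ : G ≃+ G, f • arcs S = arcs (φ '' S) := by
  obtain ⟨c, φ, rfl⟩ := exists_addEquiv_of_map_conj_rightRegular_le hf
  exact ⟨φ, by rw [mul_smul, addEquiv_smul_arcs, addRightPerm_smul_arcs]⟩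

lemma IsCISubset.exists_map_conj_rightRegular_eq {X : Set G} (hX : IsCISubset X)
    {H : Subgroup (Perm G)} (hHX : H ≤ autCay X) (hH : IsRegularSubgroup H)
    (e : H ≃* Multiplicative G) :
    ∃ u ∈ autCay X, (rightRegular G).map (MulAut.conj u).toMonoidHom = H := by
  obtain ⟨u, rfl⟩ := hH.exists_map_conj_rightRegular_eq e
  have hinv : ∀ c : G, addRightPerm c • u⁻¹ • arcs X = u⁻¹ • arcs X := fun c => by
    have hc : (u * addRightPerm c * u⁻¹) • arcs X = arcs X :=
      hHX ⟨_, mem_rightRegular.2 ⟨c, rfl⟩, rfl⟩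
    rwa [smul_smul, eq_inv_smul_iff, smul_smul, ← mul_assoc]
  have hT := eq_arcs_of_forall_addRightPerm_smul_eq hinv
  obtain ⟨φ, hφ⟩ := hX _ ⟨u⁻¹, (pmap_eq_smul _ _).trans hT⟩
  refine ⟨u * φ, mem_autCay.2 ?_, ?_⟩
  · rw [mul_smul, addEquiv_smul_arcs, hφ, ← hT, smul_inv_smul]
  · rw [← Subgroup.map_map_conj, map_conj_addEquiv_rightRegular]

lemma IsCISubset.of_forall_exists_map_conj_rightRegular_eq {X : Set G}
    (hX : ∀ H : Subgroup (Perm G), H ≤ autCay X → IsRegularSubgroup H →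
      Nonempty (H ≃* Multiplicative G) →
        ∃ u ∈ autCay X, (rightRegular G).map (MulAut.conj u).toMonoidHom = H) :
    IsCISubset X := by
  rintro T ⟨f, hf⟩
  rw [pmap_eq_smul] at hf
  have hHX : (rightRegular G).map (MulAut.conj f⁻¹).toMonoidHom ≤ autCay X := by
    rw [autCay, eq_inv_smul_iff.2 hf, MulAction.stabilizer_smul_eq_stabilizer_map_conj]
    exact Subgroup.map_mono (rightRegular_le_autCay T)
  obtain ⟨w, hw, hwH⟩ := hX _ hHX (isRegularSubgroup_rightRegular.map_conj f⁻¹)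
    ⟨((MulAut.conj f⁻¹).subgroupMap (rightRegular G)).symm.trans rightRegularEquiv⟩
  have hnorm : (rightRegular G).map (MulAut.conj (f * w)).toMonoidHom = rightRegular G := by
    rw [← Subgroup.map_map_conj, hwH, Subgroup.map_map_conj, mul_inv_cancel, map_one]
    exact Subgroup.map_id _
  obtain ⟨φ, hφ⟩ := smul_arcs_of_map_conj_rightRegular_le hnorm.le X
  exact ⟨φ, arcs_injective (by rw [← hφ, mul_smul, mem_autCay.1 hw, hf])⟩

end RightRegular

theorem statement18_general (G : Type*) [AddGroup G] (X : Set G) :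
    IsCISubset X ↔
      ∀ H1 H2 : Subgroup (Equiv.Perm G),
        (H1 : Set (Equiv.Perm G)) ⊆ autCaySet X →
        (H2 : Set (Equiv.Perm G)) ⊆ autCaySet X →
        IsRegularSubgroup H1 → IsRegularSubgroup H2 →
        Nonempty (H1 ≃* Multiplicative G) → Nonempty (H2 ≃* Multiplicative G) →
        ∃ f ∈ autCaySet X, Subgroup.map (MulAut.conj f).toMonoidHom H1 = H2 := by
  simp only [← coe_autCay, SetLike.coe_subset_coe, SetLike.mem_coe]
  constructor
  · rintro hX H1 H2 h1X h2X h1 h2 ⟨e1⟩ ⟨e2⟩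
    obtain ⟨u1, hu1, rfl⟩ := hX.exists_map_conj_rightRegular_eq h1X h1 e1
    obtain ⟨u2, hu2, rfl⟩ := hX.exists_map_conj_rightRegular_eq h2X h2 e2
    refine ⟨u2 * u1⁻¹, (autCay X).mul_mem hu2 ((autCay X).inv_mem hu1), ?_⟩
    rw [Subgroup.map_map_conj, inv_mul_cancel_right]
  · exact fun hconj => IsCISubset.of_forall_exists_map_conj_rightRegular_eq fun H hHX hH e =>
      hconj _ H (rightRegular_le_autCay X) hHX isRegularSubgroup_rightRegular hH
        ⟨rightRegularEquiv⟩ e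

/-- Babai's criterion. `X ⊆ G` is a CI-subset if and only if any two
regular subgroups of `Aut(Cay(G,X))` isomorphic to `G` are conjugate in
`Aut(Cay(G,X))`. -/
theorem statement18 (G : Type*) [AddGroup G] [Finite G] (X : Set G) :
    IsCISubset X ↔
      ∀ H1 H2 : Subgroup (Equiv.Perm G),
        (H1 : Set (Equiv.Perm G)) ⊆ autCaySet X →
        (H2 : Set (Equiv.Perm G)) ⊆ autCaySet X →
        IsRegularSubgroup H1 → IsRegularSubgroup H2 →
        Nonempty (H1 ≃* Multiplicative G) → Nonempty (H2 ≃* Multiplicative G) →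
        ∃ f ∈ autCaySet X, Subgroup.map (MulAut.conj f).toMonoidHom H1 = H2 :=
  statement18_general G X
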